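/- arXiv:1512.09296 — 4 statements merged into one kernel-verified Lean document; each statement's English description precedes it below -/
import Mathlib

section
/- Let g ≥ 1. The matrix M = M(g) satisfies M² = 4^g · I. Moreover, over ℝ, the eigenspace of M for the eigenvalue 2^g has dimension k_g^+ = 2^{g−1}(2^g+1) and the eigenspace for the eigenvalue −2^g has dimension k_g^− = 2^{g−1}(2^g−1), and these are the only eigenvalues. -/
open scoped BigOperators

/-- The quadratic form `Σ_{i=1}^g x_i x_{g+i}` on `𝔽_2^{2g}`, with `𝔽_2^{2g}`
realized as pairs `(x_1,…,x_g), (x_{g+1},…,x_{2g})`. -/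
def Qf {g : ℕ} (x : (Fin g → ZMod 2) × (Fin g → ZMod 2)) : ZMod 2 :=
  ∑ i, x.1 i * x.2 i

/-- The `4^g × 4^g` matrix `M(g)` with entry
`M_{m,n} = (−1)^{Σ_i (m_i n_{g+i} + n_i m_{g+i})}` (exponent computed using
the representatives in `{0,1}`). -/
def Mmat (g : ℕ) :
    Matrix ((Fin g → ZMod 2) × (Fin g → ZMod 2)) ((Fin g → ZMod 2) × (Fin g → ZMod 2)) ℝ :=
  fun m n => (-1 : ℝ) ^ (∑ i, ((m.1 i).val * (n.2 i).val + (n.1 i).val * (m.2 i).val))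

/-- `M⁺`, the principal submatrix of `M(g)` indexed by `K_g^+ × K_g^+`. -/
def Mplus (g : ℕ) :
    Matrix {x : (Fin g → ZMod 2) × (Fin g → ZMod 2) // Qf x = 0}
      {x : (Fin g → ZMod 2) × (Fin g → ZMod 2) // Qf x = 0} ℝ :=
  fun m n => Mmat g m.1 n.1

/-- `M⁻`, the principal submatrix of `M(g)` indexed by `K_g^− × K_g^−`. -/
def Mminus (g : ℕ) :
    Matrix {x : (Fin g → ZMod 2) × (Fin g → ZMod 2) // Qf x = 1}
      {x : (Fin g → ZMod 2) × (Fin g → ZMod 2) // Qf x = 1} ℝ :=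
  fun m n => Mmat g m.1 n.1

/-- `N`, the submatrix of `M(g)` indexed by `K_g^+ × K_g^−`. -/
def Nmat (g : ℕ) :
    Matrix {x : (Fin g → ZMod 2) × (Fin g → ZMod 2) // Qf x = 0}
      {x : (Fin g → ZMod 2) × (Fin g → ZMod 2) // Qf x = 1} ℝ :=
  fun m n => Mmat g m.1 n.1

/-!
The entries of `M` are `(-1)^{B(m,n)}` for the symplectic form `B` on `𝔽₂^{2g}`. Since `B` is
nondegenerate, orthogonality of the characters `n ↦ (-1)^{B(x,n)}` gives `M² = 4^g I`, so `M` is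
diagonalizable with eigenvalues `±2^g` and `(I ± 2^{-g} M)/2` are the projections onto the two
eigenspaces. Their traces are the dimensions, and `tr M = 4^g` because `B(m,m) = 0`.
-/

section CharacterSums

variable {R V K : Type*} [CommRing R] [AddCommGroup V] [Module R V] [Fintype V] [DecidableEq V]
  [CommRing K] [IsDomain K]

theorem sum_addChar_bilinForm_eq_ite {ψ : AddChar R K} (hψ : Function.Injective ψ)
    {B : LinearMap.BilinForm R V} (hB : B.SeparatingLeft) (x : V) :
    ∑ n, ψ (B x n) = if x = 0 then (Fintype.card V : K) else 0 := by
  have htriv : ψ.compAddMonoidHom (B x).toAddMonoidHom = 0 ↔ x = 0 := by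
    refine ⟨fun h => hB x fun n => hψ ?_, fun h => ?_⟩
    · simpa using DFunLike.congr_fun h n
    · ext n; simp [h]
  classical
  exact (AddChar.sum_eq_ite (ψ.compAddMonoidHom (B x).toAddMonoidHom)).trans
    (if_congr htriv rfl rfl)

end CharacterSums

namespace Module.End

variable {K V : Type*} [Field K] [AddCommGroup V] [Module K V]

theorem eq_or_eq_neg_of_hasEigenvalue_of_mul_self_eq {f : End K V} {c μ : K}
    (hf : f * f = c ^ 2 • 1) (hμ : f.HasEigenvalue μ) : μ = c ∨ μ = -c := by
  obtain ⟨v, hv⟩ := hμ.exists_hasEigenvector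
  have hsq : (μ ^ 2) • v = (c ^ 2) • v := by
    calc (μ ^ 2) • v = f (f v) := by
          rw [hv.apply_eq_smul, map_smul, hv.apply_eq_smul, smul_smul, sq]
      _ = (c ^ 2) • v := by rw [← mul_apply, hf]; rfl
  exact sq_eq_sq_iff_eq_or_eq_neg.1 (smul_left_injective K hv.2 hsq)

variable [NeZero (2 : K)]

theorem isProj_eigenspace_of_mul_self_eq {f : End K V} {c : K} (hc : c ≠ 0)
    (hf : f * f = c ^ 2 • 1) :
    LinearMap.IsProj (f.eigenspace c) ((2 * c)⁻¹ • (f + c • 1)) := by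
  have hff : ∀ v, f (f v) = (c ^ 2) • v := fun v => by rw [← mul_apply, hf]; rfl
  refine ⟨fun v => ?_, fun v hv => ?_⟩
  · rw [mem_eigenspace_iff]
    simp only [LinearMap.smul_apply, LinearMap.add_apply, one_apply, map_smul, map_add, hff]
    match_scalars <;> field_simp
  · rw [mem_eigenspace_iff] at hv
    simp only [LinearMap.smul_apply, LinearMap.add_apply, one_apply, hv]
    match_scalars
    field_simp
    ring

theorem finrank_eigenspace_of_mul_self_eq [FiniteDimensional K V] {f : End K V} {c : K}
    (hc : c ≠ 0) (hf : f * f = c ^ 2 • 1) :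
    (finrank K (f.eigenspace c) : K) = (LinearMap.trace K V f + c * finrank K V) / (2 * c) := by
  rw [← (isProj_eigenspace_of_mul_self_eq hc hf).trace]
  simp only [map_smul, map_add, LinearMap.trace_one, smul_eq_mul]
  field_simp

end Module.End

def signChar : AddChar (ZMod 2) ℝ := AddChar.zmodChar 2 (by norm_num : (-1 : ℝ) ^ 2 = 1)

theorem signChar_apply (t : ZMod 2) : signChar t = (-1) ^ t.val := rfl

theorem signChar_natCast (k : ℕ) : signChar k = (-1) ^ k := AddChar.zmodChar_apply' _ k

theorem signChar_injective : Function.Injective signChar := by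
  intro a b h
  rw [signChar_apply, signChar_apply] at h
  fin_cases a <;> fin_cases b <;> first | rfl | norm_num [ZMod.val] at h

abbrev SymplecticSpace (g : ℕ) : Type := (Fin g → ZMod 2) × (Fin g → ZMod 2)

theorem card_symplecticSpace (g : ℕ) : Fintype.card (SymplecticSpace g) = 4 ^ g := by
  simp [Fintype.card_prod, ZMod.card, ← mul_pow]

/-- Over `𝔽₂` this is the standard symplectic form `m.1 ⬝ᵥ n.2 - n.1 ⬝ᵥ m.2`. -/
def symplecticForm (g : ℕ) : LinearMap.BilinForm (ZMod 2) (SymplecticSpace g) :=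
  LinearMap.mk₂ (ZMod 2) (fun m n => m.1 ⬝ᵥ n.2 + n.1 ⬝ᵥ m.2)
    (fun m m' n => by simp only [Prod.fst_add, Prod.snd_add, add_dotProduct, dotProduct_add]; ring)
    (fun c m n => by
      simp only [Prod.smul_fst, Prod.smul_snd, smul_dotProduct, dotProduct_smul, smul_eq_mul]; ring)
    (fun m n n' => by simp only [Prod.fst_add, Prod.snd_add, add_dotProduct, dotProduct_add]; ring)
    (fun c m n => by
      simp only [Prod.smul_fst, Prod.smul_snd, smul_dotProduct, dotProduct_smul, smul_eq_mul]; ring)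

section SymplecticForm

variable {g : ℕ}

theorem symplecticForm_apply (m n : SymplecticSpace g) :
    symplecticForm g m n = m.1 ⬝ᵥ n.2 + n.1 ⬝ᵥ m.2 := rfl

theorem symplecticForm_comm (m n : SymplecticSpace g) :
    symplecticForm g m n = symplecticForm g n m := add_comm _ _

theorem symplecticForm_self (m : SymplecticSpace g) : symplecticForm g m m = 0 :=
  CharTwo.add_self_eq_zero _

theorem symplecticForm_separatingLeft : (symplecticForm g).SeparatingLeft := by
  intro x hx
  ext j
  · simpa [symplecticForm_apply] using hx (0, Pi.single j 1)
  · simpa [symplecticForm_apply] using hx (Pi.single j 1, 0)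

end SymplecticForm

theorem Mmat_apply {g : ℕ} (m n : SymplecticSpace g) :
    Mmat g m n = signChar (symplecticForm g m n) := by
  rw [Mmat, ← signChar_natCast]
  congr 1
  push_cast [ZMod.natCast_val, ZMod.cast_id', id, symplecticForm_apply, dotProduct]
  rw [Finset.sum_add_distrib]

theorem Mmat_mul_self (g : ℕ) : Mmat g * Mmat g = (4 ^ g : ℝ) • 1 := by
  ext m p
  calc (Mmat g * Mmat g) m p
      = ∑ n, signChar (symplecticForm g (m + p) n) := by
        simp only [Matrix.mul_apply, Mmat_apply, ← AddChar.map_add_eq_mul, map_add,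
          LinearMap.add_apply, symplecticForm_comm _ p]
    _ = if m = p then 4 ^ g else 0 := by
        rw [sum_addChar_bilinForm_eq_ite signChar_injective symplecticForm_separatingLeft,
          card_symplecticSpace]
        simp [add_eq_zero_iff_eq_neg, ZModModule.neg_eq_self]
    _ = ((4 ^ g : ℝ) • (1 : Matrix _ _ ℝ)) m p := by
        simp [Matrix.one_apply]

theorem mulVecLin_Mmat_mul_self (g : ℕ) {c : ℝ} (hc : c ^ 2 = 4 ^ g) :
    (Mmat g).mulVecLin * (Mmat g).mulVecLin = c ^ 2 • 1 := by
  rw [← Matrix.toLin'_apply', Module.End.mul_eq_comp, ← Matrix.toLin'_mul, Mmat_mul_self,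
    ← hc, map_smul, Matrix.toLin'_one]
  rfl

theorem trace_mulVecLin_Mmat (g : ℕ) :
    LinearMap.trace ℝ _ (Mmat g).mulVecLin = 4 ^ g := by
  rw [← Matrix.toLin'_apply', Matrix.trace_toLin'_eq]
  simp only [Matrix.trace, Matrix.diag, Mmat_apply, symplecticForm_self, AddChar.map_zero_eq_one,
    Finset.sum_const, Finset.card_univ, card_symplecticSpace]
  simp

/-- `M² = 4^g · I`; the eigenspace of `M` for `2^g` has dimension
`k_g^+ = 2^{g−1}(2^g+1)`, the eigenspace for `−2^g` has dimension
`k_g^− = 2^{g−1}(2^g−1)`, and these are the only eigenvalues. -/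
theorem Mmat_sq_and_eigenspaces (g : ℕ) (hg : 1 ≤ g) :
    Mmat g * Mmat g = (4 ^ g : ℝ) • 1 ∧
      Module.finrank ℝ
          (Module.End.eigenspace (Matrix.mulVecLin (Mmat g)) ((2 : ℝ) ^ g)) =
        2 ^ (g - 1) * (2 ^ g + 1) ∧
      Module.finrank ℝ
          (Module.End.eigenspace (Matrix.mulVecLin (Mmat g)) (-(2 : ℝ) ^ g)) =
        2 ^ (g - 1) * (2 ^ g - 1) ∧
      ∀ μ : ℝ, Module.End.HasEigenvalue (Matrix.mulVecLin (Mmat g)) μ →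
        μ = (2 : ℝ) ^ g ∨ μ = -(2 : ℝ) ^ g := by
  have hc : ((2 : ℝ) ^ g) ^ 2 = 4 ^ g := by rw [← pow_mul, mul_comm, pow_mul]; norm_num
  have hc' : (-(2 : ℝ) ^ g) ^ 2 = 4 ^ g := by rw [neg_sq, hc]
  have hdim : (Module.finrank ℝ (SymplecticSpace g → ℝ) : ℝ) = 4 ^ g := by
    rw [Module.finrank_fintype_fun_eq_card, card_symplecticSpace]
    simp
  obtain ⟨k, rfl⟩ : ∃ k, g = k + 1 := ⟨g - 1, by omega⟩
  refine ⟨Mmat_mul_self _, ?_, ?_, fun μ hμ =>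
    Module.End.eq_or_eq_neg_of_hasEigenvalue_of_mul_self_eq (mulVecLin_Mmat_mul_self _ hc) hμ⟩
  · apply Nat.cast_injective (R := ℝ)
    rw [Module.End.finrank_eigenspace_of_mul_self_eq (by positivity) (mulVecLin_Mmat_mul_self _ hc),
      trace_mulVecLin_Mmat, hdim, ← hc, Nat.add_sub_cancel]
    push_cast [pow_succ]
    field_simp
    ring
  · apply Nat.cast_injective (R := ℝ)
    rw [Module.End.finrank_eigenspace_of_mul_self_eq (neg_ne_zero.2 (by positivity))
      (mulVecLin_Mmat_mul_self _ hc'), trace_mulVecLin_Mmat, hdim, ← hc, Nat.add_sub_cancel,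
      Nat.cast_mul, Nat.cast_sub Nat.one_le_two_pow]
    push_cast [pow_succ]
    field_simp
    ring
end

section
/- Let g ≥ 1. Then M^+ · N = −2^{g−1} · N; that is, every column of N is an eigenvector of M^+ with eigenvalue −2^{g−1} (or zero). -/
open scoped BigOperators

namespace MP

abbrev V (g : ℕ) := (Fin g → ZMod 2) × (Fin g → ZMod 2)

noncomputable def chi (x : ZMod 2) : ℝ := (-1 : ℝ) ^ x.val

def B {g : ℕ} (m n : V g) : ZMod 2 := ∑ i, (m.1 i * n.2 i + n.1 i * m.2 i)

lemma chi_natCast (n : ℕ) : chi ((n : ZMod 2)) = (-1 : ℝ) ^ n := by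
  have h : (-1 : ℝ) ^ n = (-1 : ℝ) ^ (n % 2) := by
    conv_lhs => rw [← Nat.div_add_mod n 2]
    rw [pow_add, pow_mul]
    norm_num
  rw [h, chi, ZMod.val_natCast]

lemma chi_add (a b : ZMod 2) : chi (a + b) = chi a * chi b := by
  have ha : ((a.val : ℕ) : ZMod 2) = a := by simp
  have hb : ((b.val : ℕ) : ZMod 2) = b := by simp
  rw [← ha, ← hb, ← Nat.cast_add, chi_natCast, chi_natCast, chi_natCast, pow_add]

lemma chi_zero : chi 0 = 1 := by simp [chi]
lemma chi_one : chi 1 = -1 := by norm_num [chi, ZMod.val_one]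

lemma chi_sum {ι : Type*} (s : Finset ι) (f : ι → ZMod 2) :
    chi (∑ i ∈ s, f i) = ∏ i ∈ s, chi (f i) := by
  classical
  induction s using Finset.cons_induction with
  | empty => simp [chi_zero]
  | cons a s ha ih => rw [Finset.sum_cons, Finset.prod_cons, chi_add, ih]

lemma two_eq_zero (x : ZMod 2) : x + x = 0 := by
  rw [← two_mul]; rw [show (2 : ZMod 2) = 0 from rfl, zero_mul]

lemma addSelf {g : ℕ} (x : V g) : x + x = 0 := by
  have h : ∀ f : Fin g → ZMod 2, f + f = 0 := fun f => funext fun i => two_eq_zero (f i)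
  exact Prod.ext_iff.mpr ⟨h x.1, h x.2⟩

lemma B_symm {g : ℕ} (m n : V g) : B m n = B n m := by
  unfold B; exact Finset.sum_congr rfl fun i _ => by ring

lemma B_add_left {g : ℕ} (m n k : V g) : B (m + n) k = B m k + B n k := by
  unfold B
  rw [← Finset.sum_add_distrib]
  exact Finset.sum_congr rfl fun i _ => by
    simp only [Prod.fst_add, Prod.snd_add, Pi.add_apply]; ring

lemma B_add_right {g : ℕ} (m n k : V g) : B m (n + k) = B m n + B m k := by
  rw [B_symm, B_add_left, B_symm n m, B_symm k m]

lemma B_self {g : ℕ} (m : V g) : B m m = 0 := by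
  unfold B
  rw [Finset.sum_eq_zero]
  intro i _
  exact two_eq_zero _

lemma Qf_add {g : ℕ} (m n : V g) : Qf (m + n) = Qf m + Qf n + B m n := by
  unfold Qf B
  rw [← Finset.sum_add_distrib, ← Finset.sum_add_distrib]
  exact Finset.sum_congr rfl fun i _ => by
    simp only [Prod.fst_add, Prod.snd_add, Pi.add_apply]; ring

lemma Mmat_eq {g : ℕ} (m n : V g) : Mmat g m n = chi (B m n) := by
  unfold Mmat B
  rw [← chi_natCast]
  congr 1
  push_cast [ZMod.natCast_val, ZMod.cast_id]
  rfl

lemma sum_chi_B {g : ℕ} (v : V g) (hv : v ≠ 0) : ∑ k : V g, chi (B v k) = 0 := by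
  obtain ⟨w, hw⟩ : ∃ w : V g, B v w = 1 := by
    by_cases h1 : v.1 = 0
    · have h2 : v.2 ≠ 0 := fun h2 => hv (Prod.ext_iff.mpr ⟨h1, h2⟩)
      obtain ⟨i, hi⟩ := Function.ne_iff.mp h2
      refine ⟨(Pi.single i 1, 0), ?_⟩
      have hi1 : v.2 i = 1 := by
        have hi' : v.2 i ≠ 0 := by simpa using hi
        revert hi'; generalize v.2 i = x; revert x; decide
      unfold B
      rw [Finset.sum_eq_single i]
      · simp [hi1]
      · intro j _ hj; simp [Pi.single_apply, hj]
      · simp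
    · obtain ⟨i, hi⟩ := Function.ne_iff.mp h1
      refine ⟨(0, Pi.single i 1), ?_⟩
      have hi1 : v.1 i = 1 := by
        have hi' : v.1 i ≠ 0 := by simpa using hi
        revert hi'; generalize v.1 i = x; revert x; decide
      unfold B
      rw [Finset.sum_eq_single i]
      · simp [hi1]
      · intro j _ hj; simp [Pi.single_apply, hj]
      · simp
  have key : ∑ k : V g, chi (B v k) = - ∑ k : V g, chi (B v k) := by
    calc ∑ k : V g, chi (B v k)
        = ∑ k : V g, chi (B v (k + w)) :=
          (Fintype.sum_equiv (Equiv.addRight w) _ _ (fun k => rfl)).symm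
      _ = ∑ k : V g, -chi (B v k) := Finset.sum_congr rfl fun k _ => by
          rw [B_add_right, chi_add, hw, chi_one]; ring
      _ = - ∑ k : V g, chi (B v k) := by rw [Finset.sum_neg_distrib]
  linarith

lemma sum_chi_mul (a : ZMod 2) : ∑ y : ZMod 2, chi (a * y) = 1 + chi a := by
  have h : (Finset.univ : Finset (ZMod 2)) = {0, 1} := by decide
  rw [h, Finset.sum_insert (by decide), Finset.sum_singleton, mul_zero, mul_one, chi_zero]

lemma sum_one_add_chi : ∑ x : ZMod 2, (1 + chi x) = 2 := by
  have h : (Finset.univ : Finset (ZMod 2)) = {0, 1} := by decide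
  rw [h, Finset.sum_insert (by decide), Finset.sum_singleton, chi_zero, chi_one]; ring

lemma sum_chi_Qf {g : ℕ} : ∑ k : V g, chi (Qf k) = 2 ^ g := by
  calc ∑ k : V g, chi (Qf k)
      = ∑ a : Fin g → ZMod 2, ∑ b : Fin g → ZMod 2, ∏ i, chi (a i * b i) := by
        rw [Fintype.sum_prod_type]
        exact Finset.sum_congr rfl fun a _ => Finset.sum_congr rfl fun b _ => chi_sum _ _
    _ = ∑ a : Fin g → ZMod 2, ∏ i, (1 + chi (a i)) := by
        refine Finset.sum_congr rfl fun a _ => ?_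
        have h := Finset.prod_univ_sum (fun _ : Fin g => (Finset.univ : Finset (ZMod 2)))
          (fun i y => chi (a i * y))
        rw [Fintype.piFinset_univ] at h
        rw [← h]
        exact Finset.prod_congr rfl fun i _ => sum_chi_mul (a i)
    _ = ∏ _i : Fin g, (2 : ℝ) := by
        have h := Finset.prod_univ_sum (fun _ : Fin g => (Finset.univ : Finset (ZMod 2)))
          (fun _ y => 1 + chi y)
        rw [Fintype.piFinset_univ] at h
        rw [← h]
        exact Finset.prod_congr rfl fun i _ => sum_one_add_chi
    _ = 2 ^ g := by simp

lemma sum_chi_QB {g : ℕ} (v : V g) : ∑ k : V g, chi (Qf k + B v k) = chi (Qf v) * 2 ^ g := by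
  have h2 : ∀ x y z : ZMod 2, x + y + z + (z + 0) = y + x := by decide
  calc ∑ k : V g, chi (Qf k + B v k)
      = ∑ k : V g, chi (Qf (k + v) + B v (k + v)) :=
        (Fintype.sum_equiv (Equiv.addRight v) _ _ (fun k => rfl)).symm
    _ = ∑ k : V g, chi (Qf v) * chi (Qf k) := Finset.sum_congr rfl fun k _ => by
        rw [Qf_add, B_add_right, B_self, B_symm k v, h2, chi_add]
    _ = chi (Qf v) * 2 ^ g := by rw [← Finset.mul_sum, sum_chi_Qf]

lemma sum_filtered {g : ℕ} (v : V g) (hv : v ≠ 0) :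
    ∑ k ∈ Finset.univ.filter (fun k : V g => Qf k = 0), chi (B v k)
      = 2 ^ g / 2 * chi (Qf v) := by
  rw [Finset.sum_filter]
  have hterm : ∀ k : V g,
      (if Qf k = 0 then chi (B v k) else 0) = (1 + chi (Qf k)) * chi (B v k) / 2 := by
    intro k
    have hq : Qf k = 0 ∨ Qf k = 1 := by generalize Qf k = x; revert x; decide
    rcases hq with h | h
    · rw [if_pos h, h, chi_zero]; ring
    · rw [if_neg (by rw [h]; exact one_ne_zero), h, chi_one]; ring
  calc ∑ k : V g, (if Qf k = 0 then chi (B v k) else 0)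
      = ∑ k : V g, ((1 + chi (Qf k)) * chi (B v k) / 2) :=
        Finset.sum_congr rfl fun k _ => hterm k
    _ = (∑ k : V g, (chi (B v k) + chi (Qf k + B v k))) / 2 := by
        rw [Finset.sum_div]
        refine Finset.sum_congr rfl fun k _ => ?_
        rw [chi_add]; ring
    _ = 2 ^ g / 2 * chi (Qf v) := by
        rw [Finset.sum_add_distrib, sum_chi_B v hv, sum_chi_QB]; ring

end MP

open MP in
/-- `M⁺ · N = −2^{g−1} · N`: every column of `N` is an eigenvector of `M⁺`
with eigenvalue `−2^{g−1}` (or zero). -/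
theorem Mplus_mul_Nmat (g : ℕ) (hg : 1 ≤ g) :
    Mplus g * Nmat g = (-(2 : ℝ) ^ (g - 1)) • Nmat g := by
  ext ⟨m, hm⟩ ⟨n, hn⟩
  rw [Matrix.mul_apply, Matrix.smul_apply, smul_eq_mul]
  simp only [Mplus, Nmat, Mmat_eq]
  have hterm : ∀ k : V g, chi (B m k) * chi (B k n) = chi (B (m + n) k) := fun k => by
    rw [B_add_left, chi_add, B_symm k n]
  have hv : m + n ≠ 0 := by
    intro h
    have h1 : m + n + n = (0 : V g) + n := by rw [h]
    rw [add_assoc, addSelf, add_zero, zero_add] at h1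
    rw [h1] at hm
    rw [hm] at hn
    exact absurd hn (by decide)
  have hsub : ∑ j : {x : V g // Qf x = 0}, chi (B (m + n) j.1)
      = ∑ k ∈ Finset.univ.filter (fun k : V g => Qf k = 0), chi (B (m + n) k) :=
    (Finset.sum_subtype (Finset.univ.filter fun k : V g => Qf k = 0)
      (fun x => by simp) (fun k => chi (B (m + n) k))).symm
  calc ∑ j : {x : V g // Qf x = 0}, chi (B m j.1) * chi (B j.1 n)
      = ∑ j : {x : V g // Qf x = 0}, chi (B (m + n) j.1) :=
        Finset.sum_congr rfl fun j _ => hterm j.1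
    _ = 2 ^ g / 2 * chi (Qf (m + n)) := by rw [hsub, sum_filtered _ hv]
    _ = -(2 : ℝ) ^ (g - 1) * chi (B m n) := by
        rw [Qf_add, hm, hn, zero_add, chi_add, chi_one]
        obtain ⟨g', rfl⟩ := Nat.exists_eq_add_of_le hg
        rw [show 1 + g' - 1 = g' from by omega, pow_add]
        ring
end

section
/- Let g ≥ 1. For any vector X ∈ ℝ^{K_g^+} one has M^+ X = 2^g X if and only if N^T X = 0; and for any vector Y ∈ ℝ^{K_g^−} one has M^− Y = −2^g Y if and only if N Y = 0. -/
open scoped BigOperators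
open Matrix

/-!
Write `σ(a) = (-1)^a` on `𝔽₂` and `ω(m,n) = Σᵢ (mᵢ n_{g+i} + nᵢ m_{g+i})`, so that
`M_{m,n} = σ(ω(m,n))` and `Q(m + m') = Q(m) + Q(m') + ω(m,m')`. Averaging the indicator of
`K^±` as `(1 ± σ(Q))/2`, the orthogonality of the characters `σ(ω(v,·))` and the Gauss sum
`Σₙ σ(Q(n)) = 2^g` give the Gram identities `N Nᵀ = 2^(g-1) (2^g I - M⁺)` and
`Nᵀ N = 2^(g-1) (2^g I + M⁻)`. Over `ℝ`, `ker (A Aᵀ) = ker Aᵀ`.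
-/

section Gram

variable {m n R : Type*} [Fintype m] [Fintype n] [Field R] [LinearOrder R] [IsStrictOrderedRing R]

theorem Matrix.mul_transpose_self_mulVec_eq_zero_iff (A : Matrix m n R) (x : m → R) :
    (A * Aᵀ) *ᵥ x = 0 ↔ Aᵀ *ᵥ x = 0 := by
  simpa only [LinearMap.mem_ker, mulVecLin_apply, transpose_transpose] using
    SetLike.ext_iff.mp (ker_mulVecLin_transpose_mul_self Aᵀ) x

theorem Matrix.mulVec_eq_smul_iff_of_smul_mul_transpose_eq [DecidableEq m] {A : Matrix m n R}
    {M : Matrix m m R} {c d μ : R} (hc : c ≠ 0) (hd : d ≠ 0) (h : c • (A * Aᵀ) = d • (μ • 1 - M))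
    (x : m → R) : M *ᵥ x = μ • x ↔ Aᵀ *ᵥ x = 0 := by
  rw [← mul_transpose_self_mulVec_eq_zero_iff, ← smul_eq_zero_iff_right hc, ← smul_mulVec, h,
    smul_mulVec, smul_eq_zero_iff_right hd, sub_mulVec, smul_mulVec, one_mulVec, sub_eq_zero,
    eq_comm]

end Gram

namespace SymplecticF2

lemma zmodTwo_eq_zero_or_one (a : ZMod 2) : a = 0 ∨ a = 1 := by
  revert a
  decide

def signChar : AddChar (ZMod 2) ℝ := AddChar.zmodChar 2 (by norm_num : (-1 : ℝ) ^ 2 = 1)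

lemma signChar_natCast (k : ℕ) : signChar k = (-1) ^ k := AddChar.zmodChar_apply' _ k

lemma signChar_one : signChar 1 = -1 := by simpa using signChar_natCast 1

lemma signChar_eq_one_iff {a : ZMod 2} : signChar a = 1 ↔ a = 0 := by
  rcases zmodTwo_eq_zero_or_one a with rfl | rfl <;> norm_num [signChar_one]

lemma sum_signChar_comp {G : Type*} [AddGroup G] [Fintype G] (f : G →+ ZMod 2) :
    ∑ x, signChar (f x) = if ∀ x, f x = 0 then (Fintype.card G : ℝ) else 0 := by
  have hψ : signChar.compAddMonoidHom f = 0 ↔ ∀ x, f x = 0 := by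
    simp only [DFunLike.ext_iff, AddChar.compAddMonoidHom_apply, AddChar.zero_apply,
      signChar_eq_one_iff]
  simpa only [AddChar.compAddMonoidHom_apply, hψ] using
    AddChar.sum_eq_ite (signChar.compAddMonoidHom f)

lemma sum_subtype_eq_signChar {α : Type*} [Fintype α] (q : α → ZMod 2) (c : ZMod 2)
    (f : α → ℝ) :
    ∑ x : {x // q x = c}, f x = (∑ x, f x + signChar c * ∑ x, signChar (q x) * f x) / 2 := by
  classical
  have indicator (a : ZMod 2) :
      (if a = c then 1 else 0 : ℝ) = (1 + signChar c * signChar a) / 2 := by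
    rcases zmodTwo_eq_zero_or_one a with rfl | rfl <;>
      rcases zmodTwo_eq_zero_or_one c with rfl | rfl <;> norm_num [signChar_one]
  rw [← Finset.sum_subtype {x | q x = c} (by simp) f, Finset.sum_filter, Finset.mul_sum,
    ← Finset.sum_add_distrib, Finset.sum_div]
  refine Finset.sum_congr rfl fun x _ => ?_
  rw [← boole_mul, indicator]
  ring

abbrev V (g : ℕ) := (Fin g → ZMod 2) × (Fin g → ZMod 2)

variable {g : ℕ}

def symp (x y : V g) : ZMod 2 := x.1 ⬝ᵥ y.2 + y.1 ⬝ᵥ x.2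

lemma symp_comm (x y : V g) : symp x y = symp y x := add_comm _ _

lemma symp_add_right (v x y : V g) : symp v (x + y) = symp v x + symp v y := by
  simp only [symp, Prod.fst_add, Prod.snd_add, dotProduct_add, add_dotProduct]
  abel

lemma forall_symp_eq_zero_iff (v : V g) : (∀ n, symp v n = 0) ↔ v = 0 := by
  refine ⟨fun h => Prod.ext (dotProduct_eq_zero _ fun w => ?_) (dotProduct_eq_zero _ fun w => ?_),
    fun h n => by simp [h, symp]⟩
  · simpa [symp] using h (0, w)
  · simpa [symp, dotProduct_comm] using h (w, 0)

lemma Qf_eq_dotProduct (x : V g) : Qf x = x.1 ⬝ᵥ x.2 := rfl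

lemma Qf_add (x y : V g) : Qf (x + y) = Qf x + Qf y + symp x y := by
  simp only [Qf_eq_dotProduct, symp, Prod.fst_add, Prod.snd_add, dotProduct_add, add_dotProduct]
  abel

lemma Mmat_eq_signChar_symp (m n : V g) : Mmat g m n = signChar (symp m n) := by
  rw [Mmat, ← signChar_natCast]
  simp [symp, dotProduct, Finset.sum_add_distrib]

lemma Mmat_comm (m n : V g) : Mmat g m n = Mmat g n m := by
  rw [Mmat_eq_signChar_symp, Mmat_eq_signChar_symp, symp_comm]

lemma sum_signChar_symp (v : V g) :
    ∑ n, signChar (symp v n) = if v = 0 then (4 : ℝ) ^ g else 0 := by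
  refine (sum_signChar_comp (AddMonoidHom.mk' (symp v) (symp_add_right v))).trans ?_
  simp only [AddMonoidHom.mk'_apply, forall_symp_eq_zero_iff]
  norm_num [Fintype.card_prod, ← mul_pow]

lemma sum_signChar_Qf : ∑ x : V g, signChar (Qf x) = 2 ^ g := by
  have inner (a : Fin g → ZMod 2) :
      ∑ b, signChar (a ⬝ᵥ b) = if a = 0 then (2 : ℝ) ^ g else 0 := by
    refine (sum_signChar_comp (AddMonoidHom.mk' (a ⬝ᵥ ·) (dotProduct_add a))).trans ?_
    simp only [AddMonoidHom.mk'_apply, dotProduct_eq_zero_iff]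
    norm_num
  rw [Fintype.sum_prod_type]
  simp only [Qf_eq_dotProduct, inner, Finset.sum_ite_eq', Finset.mem_univ, if_true]

lemma sum_signChar_Qf_add_symp (v : V g) :
    ∑ n, signChar (Qf n + symp v n) = signChar (Qf v) * 2 ^ g := by
  have shift (n : V g) : Qf n + symp v n = Qf v + Qf (n + v) := by
    rw [Qf_add, symp_comm v n]
    linear_combination -CharTwo.add_self_eq_zero (Qf v)
  simp only [shift, AddChar.map_add_eq_mul, ← Finset.mul_sum]
  rw [Fintype.sum_equiv (Equiv.addRight v) (fun n => signChar (Qf (n + v)))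
    (fun n => signChar (Qf n)) fun _ => rfl, sum_signChar_Qf]

lemma sum_Mmat_mul_Mmat {m m' : V g} (h : Qf m = Qf m') (c : ZMod 2) :
    ∑ n : {x : V g // Qf x = c}, Mmat g m n * Mmat g m' n
      = ((if m = m' then (4 : ℝ) ^ g else 0) + signChar c * 2 ^ g * Mmat g m m') / 2 := by
  have hprod (n : V g) : Mmat g m n * Mmat g m' n = signChar (symp (m + m') n) := by
    rw [Mmat_eq_signChar_symp, Mmat_eq_signChar_symp, ← AddChar.map_add_eq_mul, symp_comm,
      symp_comm m', ← symp_add_right, symp_comm]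
  have hQ : Qf (m + m') = symp m m' := by
    rw [Qf_add, h, CharTwo.add_self_eq_zero, zero_add]
  have hzero : m + m' = 0 ↔ m = m' := by
    simp only [Prod.ext_iff, funext_iff, Prod.fst_add, Prod.snd_add, Pi.add_apply,
      Prod.fst_zero, Prod.snd_zero, Pi.zero_apply, CharTwo.add_eq_zero]
  simp only [hprod]
  rw [sum_subtype_eq_signChar Qf c fun n => signChar (symp (m + m') n)]
  simp only [← AddChar.map_add_eq_mul]
  rw [sum_signChar_symp, sum_signChar_Qf_add_symp, hQ, ← Mmat_eq_signChar_symp]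
  simp only [hzero]
  ring

end SymplecticF2

open SymplecticF2

lemma two_smul_Nmat_mul_transpose (g : ℕ) :
    (2 : ℝ) • (Nmat g * (Nmat g)ᵀ) = (2 : ℝ) ^ g • ((2 : ℝ) ^ g • 1 - Mplus g) := by
  ext m m'
  simp only [Matrix.smul_apply, mul_apply, transpose_apply, Nmat, Matrix.sub_apply, one_apply,
    Mplus, smul_eq_mul]
  rw [sum_Mmat_mul_Mmat (m.2.trans m'.2.symm), signChar_one,
    show (4 : ℝ) ^ g = 2 ^ g * 2 ^ g by rw [← mul_pow]; norm_num]
  simp only [Subtype.ext_iff]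
  split_ifs <;> ring

lemma two_smul_transpose_mul_Nmat (g : ℕ) :
    (2 : ℝ) • ((Nmat g)ᵀ * Nmat g) = (-(2 : ℝ) ^ g) • ((-(2 : ℝ) ^ g) • 1 - Mminus g) := by
  ext m m'
  simp only [Matrix.smul_apply, mul_apply, transpose_apply, Nmat, Matrix.sub_apply, one_apply,
    Mminus, smul_eq_mul]
  rw [Fintype.sum_congr _ _ fun n => by rw [Mmat_comm n.1, Mmat_comm n.1],
    sum_Mmat_mul_Mmat (m.2.trans m'.2.symm), AddChar.map_zero_eq_one,
    show (4 : ℝ) ^ g = 2 ^ g * 2 ^ g by rw [← mul_pow]; norm_num]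
  simp only [Subtype.ext_iff]
  split_ifs <;> ring

theorem eigen_iff_kernel_general (g : ℕ) :
    (∀ X : {x : (Fin g → ZMod 2) × (Fin g → ZMod 2) // Qf x = 0} → ℝ,
        (Mplus g).mulVec X = (2 : ℝ) ^ g • X ↔ (Nmat g)ᵀ.mulVec X = 0) ∧
      ∀ Y : {x : (Fin g → ZMod 2) × (Fin g → ZMod 2) // Qf x = 1} → ℝ,
        (Mminus g).mulVec Y = (-(2 : ℝ) ^ g) • Y ↔ (Nmat g).mulVec Y = 0 := by
  have h2g : (2 : ℝ) ^ g ≠ 0 := by positivity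
  refine ⟨mulVec_eq_smul_iff_of_smul_mul_transpose_eq two_ne_zero h2g
    (two_smul_Nmat_mul_transpose g), fun Y => ?_⟩
  simpa only [transpose_transpose] using
    mulVec_eq_smul_iff_of_smul_mul_transpose_eq (A := (Nmat g)ᵀ) two_ne_zero (neg_ne_zero.2 h2g)
      (by rw [transpose_transpose]; exact two_smul_transpose_mul_Nmat g) Y

/-- `M⁺X = 2^g X ↔ NᵀX = 0`, and `M⁻Y = −2^g Y ↔ NY = 0`. -/
theorem eigen_iff_kernel (g : ℕ) (hg : 1 ≤ g) :
    (∀ X : {x : (Fin g → ZMod 2) × (Fin g → ZMod 2) // Qf x = 0} → ℝ,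
        (Mplus g).mulVec X = (2 : ℝ) ^ g • X ↔ (Nmat g)ᵀ.mulVec X = 0) ∧
      ∀ Y : {x : (Fin g → ZMod 2) × (Fin g → ZMod 2) // Qf x = 1} → ℝ,
        (Mminus g).mulVec Y = (-(2 : ℝ) ^ g) • Y ↔ (Nmat g).mulVec Y = 0 :=
  eigen_iff_kernel_general g
end

section
/- Two claims. (1) Let g ≥ 1 and let L(g) be the g-fold Kronecker product of the 3×3 matrix M^+(1). Then the characteristic polynomial of L(g) equals ∏_{k=0}^{g} (X − (−1)^k 2^{g−k})^{binom(g,k)·2^{g−k}}; in particular the eigenvalues of L(g) are (−1)^k 2^{g−k} with multiplicity binom(g,k)·2^{g−k} for k = 0, …, g. (2) Consequently the matrix 2^{g−1}(2^g · I_{3^g} − L(g)) has rank 3^g − 2^g. -/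
/-!
`M⁺(1) = P · diag(2, 2, -1) · P⁻¹`, and taking `g`-fold Kronecker powers is multiplicative, so
`L(g)` is conjugate to the diagonal matrix whose entry at `m ∈ Fin g → Fin 3` is
`(-1)^k 2^(g-k)`, where `k` is the number of coordinates of `m` equal to `2`, the position of
the eigenvalue `-1`. Exactly `C(g,k) 2^(g-k)` indices have a given `k` (the coefficient of `X^k`
in `(X + 2)^g = ∑ₘ X^k(m)`), which gives the characteristic polynomial. The same conjugation
turns `2^g I - L(g)` into a diagonal matrix whose zero entries are those with `k = 0`, so its
rank is `3^g - 2^g`.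
-/

open scoped BigOperators

/-- The `3 × 3` matrix `M⁺(1) = [[1,1,1],[1,1,−1],[1,−1,1]]`. -/
def MplusOne : Matrix (Fin 3) (Fin 3) ℝ :=
  !![1, 1, 1; 1, 1, -1; 1, -1, 1]

/-- `L(g)`, the `g`-fold Kronecker product of `M⁺(1)`, realized as the
`3^g × 3^g` matrix with entry `∏ i, M⁺(1) (m i) (n i)`. -/
def Lmat (g : ℕ) : Matrix (Fin g → Fin 3) (Fin g → Fin 3) ℝ :=
  fun m n => ∏ i, MplusOne (m i) (n i)

open Matrix Polynomial Finset

namespace Matrix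

variable {ι n R : Type*} [Fintype ι] [DecidableEq ι] [Fintype n] [DecidableEq n] [CommRing R]

def piKronecker : Matrix n n R →* Matrix (ι → n) (ι → n) R where
  toFun A := of fun m m' => ∏ i, A (m i) (m' i)
  map_one' := by
    ext m m'
    simp only [of_apply, one_apply, prod_ite_zero, prod_const_one, mem_univ, forall_const,
      funext_iff]
  map_mul' A B := by
    ext m m'
    simp only [of_apply, mul_apply, prod_univ_sum, Fintype.piFinset_univ, prod_mul_distrib]

theorem piKronecker_apply (A : Matrix n n R) (m m' : ι → n) :
    piKronecker A m m' = ∏ i, A (m i) (m' i) := rfl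

theorem piKronecker_diagonal (d : n → R) :
    piKronecker (diagonal d) = diagonal fun m : ι → n => ∏ i, d (m i) := by
  ext m m'
  simp only [piKronecker_apply, diagonal_apply, prod_ite_zero, mem_univ, forall_const, funext_iff]

theorem piKronecker_units_conj (U : (Matrix n n R)ˣ) (A : Matrix n n R) :
    piKronecker (U.val * A * U⁻¹.val) =
      (Units.map (piKronecker (ι := ι)) U).val * piKronecker A *
        (Units.map (piKronecker (ι := ι)) U)⁻¹.val := by
  simp only [map_mul, Units.coe_map, Units.coe_map_inv]

theorem rank_units_conj (U : (Matrix n n R)ˣ) (A : Matrix n n R) :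
    (U.val * A * U⁻¹.val).rank = A.rank := by
  rw [rank_mul_eq_left_of_isUnit_det _ _ (isUnits_det_units U⁻¹),
    rank_mul_eq_right_of_isUnit_det _ _ (isUnits_det_units U)]

theorem smul_one_sub_units_conj (U : (Matrix n n R)ˣ) (A : Matrix n n R) (c : R) :
    c • 1 - U.val * A * U⁻¹.val = U.val * (c • 1 - A) * U⁻¹.val := by
  rw [mul_sub, sub_mul, Matrix.mul_smul, Matrix.mul_one, Matrix.smul_mul, Units.mul_inv]

end Matrix

theorem Fintype.prod_apply_eq_pow_mul_pow {ι α M : Type*} [Fintype ι] [DecidableEq α]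
    [CommMonoid M] {f : α → M} {a : α} {c : M} (hf : ∀ b ≠ a, f b = c) (m : ι → α) :
    ∏ i, f (m i) = f a ^ #{i | m i = a} * c ^ (Fintype.card ι - #{i | m i = a}) := by
  have hf' : ∀ i, f (m i) = if m i = a then f a else c := fun i => by
    split_ifs with h
    · rw [h]
    · exact hf _ h
  have hcard := card_filter_add_card_filter_not (s := univ) (fun i => m i = a)
  rw [Fintype.prod_congr _ _ hf', prod_ite, prod_const, prod_const, ← card_univ, ← hcard,
    Nat.add_sub_cancel_left]

theorem Fintype.card_filter_card_filter_eq {ι α : Type*} [Fintype ι] [DecidableEq ι]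
    [Fintype α] [DecidableEq α] (a : α) (k : ℕ) :
    #{m : ι → α | #{i | m i = a} = k} =
      (Fintype.card ι).choose k * (Fintype.card α - 1) ^ (Fintype.card ι - k) := by
  have hgen : ∑ m : ι → α, (X : ℕ[X]) ^ #{i | m i = a} =
      (X + C (Fintype.card α - 1)) ^ Fintype.card ι := by
    have hfactor : ∑ b : α, (if b = a then X else 1 : ℕ[X]) = X + C (Fintype.card α - 1) := by
      rw [sum_ite, sum_const, sum_const, filter_eq', filter_ne', card_erase_of_mem (mem_univ a)]
      simp
    rw [← hfactor, ← card_univ, ← prod_const, prod_univ_sum]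
    simp only [Fintype.piFinset_univ, prod_ite, prod_const, one_pow, mul_one]
  have hcoeff := congrArg (coeff · k) hgen
  simp only [finsetSum_coeff, coeff_X_pow, coeff_X_add_C_pow] at hcoeff
  rw [card_filter, mul_comm]
  simpa only [eq_comm (a := k), Nat.cast_id] using hcoeff

theorem Fintype.prod_comp_card_filter_eq {ι α M : Type*} [Fintype ι] [DecidableEq ι]
    [Fintype α] [DecidableEq α] [CommMonoid M] (a : α) (f : ℕ → M) :
    ∏ m : ι → α, f #{i | m i = a} = ∏ k ∈ range (Fintype.card ι + 1),
      f k ^ ((Fintype.card ι).choose k * (Fintype.card α - 1) ^ (Fintype.card ι - k)) := by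
  rw [← prod_fiberwise_of_maps_to (t := range (Fintype.card ι + 1))
    fun m _ => mem_range_succ_iff.mpr (card_le_univ _)]
  refine Finset.prod_congr rfl fun k _ => ?_
  rw [Finset.prod_congr rfl fun m hm => by rw [(mem_filter.mp hm).2], prod_const,
    card_filter_card_filter_eq]

noncomputable def eigenbasis : (Matrix (Fin 3) (Fin 3) ℝ)ˣ where
  val := !![1, 1, 1; 1, 0, -1; 0, 1, -1]
  inv := !![1/3, 2/3, -1/3; 1/3, -1/3, 2/3; 1/3, -1/3, -1/3]
  val_inv := by rw [mul_fin_three, one_fin_three]; norm_num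
  inv_val := by rw [mul_fin_three, one_fin_three]; norm_num

theorem MplusOne_eq_units_conj_diagonal :
    MplusOne = eigenbasis.val * diagonal ![2, 2, -1] * eigenbasis⁻¹.val := by
  rw [diagonal_fin_three, show (![2, 2, -1] : Fin 3 → ℝ) 2 = -1 from rfl]
  simp only [eigenbasis, Units.inv_mk]
  rw [mul_fin_three, mul_fin_three, MplusOne]
  norm_num

theorem Lmat_eq_units_conj_diagonal (g : ℕ) :
    Lmat g = (Units.map (piKronecker (ι := Fin g)) eigenbasis).val *
      diagonal (fun m => (-1 : ℝ) ^ #{i | m i = 2} * 2 ^ (g - #{i | m i = 2})) *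
      (Units.map (piKronecker (ι := Fin g)) eigenbasis)⁻¹.val := by
  have hoff : ∀ b ≠ 2, (![2, 2, -1] : Fin 3 → ℝ) b = 2 := by
    intro b hb
    fin_cases b <;> simp_all
  have hkron : Lmat g = piKronecker MplusOne := rfl
  rw [hkron, MplusOne_eq_units_conj_diagonal, piKronecker_units_conj, piKronecker_diagonal]
  simp_rw [Fintype.prod_apply_eq_pow_mul_pow hoff, Fintype.card_fin]
  rfl

theorem two_pow_sub_neg_one_pow_mul_two_pow_ne_zero_iff {g k : ℕ} (hk : k ≤ g) :
    (2 : ℝ) ^ g - (-1) ^ k * 2 ^ (g - k) ≠ 0 ↔ k ≠ 0 := by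
  rcases k.eq_zero_or_pos with rfl | hk0
  · simp
  refine iff_of_true (sub_ne_zero.mpr (ne_of_gt ?_)) hk0.ne'
  calc (-1 : ℝ) ^ k * 2 ^ (g - k) ≤ 2 ^ (g - k) := by
        rcases neg_one_pow_eq_or ℝ k with h | h <;> rw [h] <;>
          linarith [pow_pos (two_pos : (0 : ℝ) < 2) (g - k)]
    _ < 2 ^ g := pow_lt_pow_right₀ one_lt_two (by omega)

theorem Lmat_charpoly_and_rank_general (g : ℕ) :
    (Lmat g).charpoly =
        ∏ k ∈ Finset.range (g + 1),
          (Polynomial.X - Polynomial.C ((-1 : ℝ) ^ k * 2 ^ (g - k))) ^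
            (g.choose k * 2 ^ (g - k)) ∧
      ((2 : ℝ) ^ (g - 1) •
          ((2 : ℝ) ^ g • (1 : Matrix (Fin g → Fin 3) (Fin g → Fin 3) ℝ) - Lmat g)).rank =
        3 ^ g - 2 ^ g := by
  classical
  have hL := Lmat_eq_units_conj_diagonal g
  constructor
  · rw [hL, coe_units_inv, charpoly_units_conj, charpoly_diagonal,
      Fintype.prod_comp_card_filter_eq 2 fun k => X - C ((-1 : ℝ) ^ k * 2 ^ (g - k))]
    simp only [Fintype.card_fin]
  · rw [rank_smul_of_mem_nonZeroDivisors _ (mem_nonZeroDivisors_of_ne_zero (by positivity)), hL,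
      smul_one_sub_units_conj, rank_units_conj, smul_one_eq_diagonal, diagonal_sub,
      rank_diagonal, Fintype.card_subtype,
      filter_congr fun m _ => two_pow_sub_neg_one_pow_mul_two_pow_ne_zero_iff
        ((card_le_univ _).trans_eq (Fintype.card_fin g)),
      filter_not, card_sdiff_of_subset (filter_subset _ _), Fintype.card_filter_card_filter_eq]
    simp

/-- The characteristic polynomial of `L(g)` is
`∏_{k=0}^{g} (X − (−1)^k 2^{g−k})^{C(g,k)·2^{g−k}}` (so the eigenvalues of `L(g)`
are `(−1)^k 2^{g−k}` with multiplicity `C(g,k)·2^{g−k}`), and consequently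
`2^{g−1}(2^g·I − L(g))` has rank `3^g − 2^g`. -/
theorem Lmat_charpoly_and_rank (g : ℕ) (hg : 1 ≤ g) :
    (Lmat g).charpoly =
        ∏ k ∈ Finset.range (g + 1),
          (Polynomial.X - Polynomial.C ((-1 : ℝ) ^ k * 2 ^ (g - k))) ^
            (g.choose k * 2 ^ (g - k)) ∧
      ((2 : ℝ) ^ (g - 1) •
          ((2 : ℝ) ^ g • (1 : Matrix (Fin g → Fin 3) (Fin g → Fin 3) ℝ) - Lmat g)).rank =
        3 ^ g - 2 ^ g :=
  Lmat_charpoly_and_rank_general g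
end
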